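/- arXiv:2207.06615 — 5 statements merged into one kernel-verified Lean document; each statement's English description precedes it below -/
import Mathlib

section
/- Let N ≥ 1, f : Fin N → Fin N, Λ ⊆ Fin N and Φ ⊆ Fin N. Let τ be the transient period of f and λ the least common multiple of the minimal periods of the periodic points of f. Then the system is approximately synchronous with respect to Φ (i.e., there exists an integer ρ ≥ 1 such that f^[t] x ∈ Λ for all x ∈ Φ and all t ≥ ρ) if and only if f^[t] x ∈ Λ for every x ∈ Φ and every t with τ ≤ t ≤ τ + λ − 1. -/
/-! Once every orbit has entered the periodic part, at time `τ`, it repeats with period `λ`, since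
every minimal period divides `λ`. So from time `τ` on, `f^[t] x` depends only on `t mod λ`, and the
window `τ ≤ t < τ + λ` meets every residue class exactly once. -/

namespace Function

variable {α : Type*} {f : α → α}

theorem IsPeriodicPt.iterate_eq_of_modEq {p : ℕ} {x : α} (hx : IsPeriodicPt f p x) {a b : ℕ}
    (hab : a ≡ b [MOD p]) : f^[a] x = f^[b] x := by
  rw [← hx.iterate_mod_apply a, ← hx.iterate_mod_apply b, hab]

theorem iterate_eq_of_modEq_of_le {p τ : ℕ} {x : α} (hx : IsPeriodicPt f p (f^[τ] x))
    {s t : ℕ} (hs : τ ≤ s) (ht : τ ≤ t) (hst : s ≡ t [MOD p]) : f^[s] x = f^[t] x := by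
  obtain ⟨a, rfl⟩ := Nat.exists_eq_add_of_le hs
  obtain ⟨b, rfl⟩ := Nat.exists_eq_add_of_le ht
  rw [add_comm τ a, add_comm τ b, iterate_add_apply, iterate_add_apply]
  exact hx.iterate_eq_of_modEq (Nat.ModEq.add_left_cancel' τ hst)

theorem eventually_mem_iff_forall_mem_window {p τ : ℕ} (hp : 0 < p) {Φ Λ : Set α}
    (hΦ : ∀ x ∈ Φ, IsPeriodicPt f p (f^[τ] x)) :
    (∃ ρ : ℕ, 1 ≤ ρ ∧ ∀ x ∈ Φ, ∀ t ≥ ρ, f^[t] x ∈ Λ) ↔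
      ∀ x ∈ Φ, ∀ t : ℕ, τ ≤ t → t < τ + p → f^[t] x ∈ Λ := by
  constructor
  · rintro ⟨ρ, -, hρ⟩ x hx t hτt -
    have hshift : t + ρ * p ≡ t [MOD p] := Nat.add_mul_modulus_modEq_iff.2 rfl
    rw [← iterate_eq_of_modEq_of_le (hΦ x hx) (hτt.trans (Nat.le_add_right t _)) hτt hshift]
    exact hρ x hx _ (le_add_left (Nat.le_mul_of_pos_right ρ hp))
  · intro hwindow
    refine ⟨max τ 1, le_max_right τ 1, fun x hx t ht => ?_⟩
    have hτt : τ ≤ t := (le_max_left τ 1).trans ht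
    have hred : τ + (t - τ) % p ≡ t [MOD p] := by
      calc τ + (t - τ) % p ≡ τ + (t - τ) [MOD p] := Nat.ModEq.add_left τ (Nat.mod_modEq _ p)
        _ = t := Nat.add_sub_cancel' hτt
    rw [← iterate_eq_of_modEq_of_le (hΦ x hx) (Nat.le_add_right τ _) hτt hred]
    exact hwindow x hx _ (Nat.le_add_right τ _) (Nat.add_lt_add_left (Nat.mod_lt _ hp) τ)

theorem lcm_minimalPeriod_pos {s : Finset α} (hs : ∀ y ∈ s, y ∈ periodicPts f) :
    0 < s.lcm (minimalPeriod f) := by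
  refine Nat.pos_of_ne_zero fun h => ?_
  obtain ⟨y, hy, hy0⟩ := Finset.lcm_eq_zero_iff.1 h
  exact (minimalPeriod_pos_of_mem_periodicPts (hs y hy)).ne' hy0

end Function

open scoped Classical

theorem approx_sync_iff_window_general (N : ℕ) (f : Fin N → Fin N)
    (Λ Φ : Set (Fin N))
    (τ : ℕ) (hτ : IsLeast {t : ℕ | ∀ x : Fin N, f^[t] x ∈ Function.periodicPts f} τ)
    (lam : ℕ)
    (hlam : lam = (Finset.univ.filter fun x : Fin N => x ∈ Function.periodicPts f).lcm
      (Function.minimalPeriod f)) :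
    (∃ ρ : ℕ, 1 ≤ ρ ∧ ∀ x ∈ Φ, ∀ t ≥ ρ, f^[t] x ∈ Λ) ↔
    (∀ x ∈ Φ, ∀ t : ℕ, τ ≤ t → t ≤ τ + lam - 1 → f^[t] x ∈ Λ) := by
  have hlam_pos : 0 < lam := hlam ▸ Function.lcm_minimalPeriod_pos fun y hy => (Finset.mem_filter.1 hy).2
  have hperiodic : ∀ x, Function.IsPeriodicPt f lam (f^[τ] x) := fun x =>
    hlam ▸ Function.isPeriodicPt_iff_minimalPeriod_dvd.2 (Finset.dvd_lcm (by simpa using hτ.1 x))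
  rw [Function.eventually_mem_iff_forall_mem_window hlam_pos fun x _ => hperiodic x]
  refine forall₂_congr fun x _ => forall_congr' fun t => imp_congr_right fun _ => ?_
  exact imp_congr_left (by omega)

/-- Theorem 1(1): the system is approximately synchronous with respect to
`Φ` iff `f^[t] x ∈ Λ` for every `x ∈ Φ` and every `t` with
`τ ≤ t ≤ τ + λ − 1`, where `τ` is the transient period and `λ` the lcm
of the minimal periods of the periodic points. -/
theorem approx_sync_iff_window (N : ℕ) (hN : 1 ≤ N) (f : Fin N → Fin N)
    (Λ Φ : Set (Fin N))
    (τ : ℕ) (hτ : IsLeast {t : ℕ | ∀ x : Fin N, f^[t] x ∈ Function.periodicPts f} τ)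
    (lam : ℕ)
    (hlam : lam = (Finset.univ.filter fun x : Fin N => x ∈ Function.periodicPts f).lcm
      (Function.minimalPeriod f)) :
    (∃ ρ : ℕ, 1 ≤ ρ ∧ ∀ x ∈ Φ, ∀ t ≥ ρ, f^[t] x ∈ Λ) ↔
    (∀ x ∈ Φ, ∀ t : ℕ, τ ≤ t → t ≤ τ + lam - 1 → f^[t] x ∈ Λ) :=
  approx_sync_iff_window_general N f Λ Φ τ hτ lam hlam
end

section
/- Let N ≥ 1, f : Fin N → Fin N and Λ ⊆ Fin N. Let τ be the transient period of f. Then the system is globally approximately synchronous (i.e., there exists an integer ρ ≥ 1 such that f^[t] x ∈ Λ for all x ∈ Fin N and all t ≥ ρ) if and only if f^[τ] x ∈ Λ for every x ∈ Fin N (equivalently, every column of L^τ lies in Λ for the associated logic matrix L). -/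
namespace Function

variable {α : Type*} {f : α → α} {Λ : Set α}

theorem mem_of_mem_periodicPts_of_iterate_mem {y : α} (hy : y ∈ periodicPts f) {ρ : ℕ}
    (hΛ : ∀ t ≥ ρ, f^[t] y ∈ Λ) : y ∈ Λ := by
  obtain ⟨n, hn, hper⟩ := hy
  have hreturn : f^[n * ρ] y = y := hper.mul_const ρ
  rw [← hreturn]
  exact hΛ _ (Nat.le_mul_of_pos_left ρ hn)

theorem iterate_mem_of_le {τ t : ℕ} (hτ : ∀ x, f^[τ] x ∈ Λ) (ht : τ ≤ t) (x : α) :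
    f^[t] x ∈ Λ := by
  obtain ⟨s, rfl⟩ := Nat.exists_eq_add_of_le ht
  rw [iterate_add_apply]
  exact hτ _

end Function

theorem global_approx_sync_iff_tau_general (N : ℕ) (f : Fin N → Fin N)
    (Λ : Set (Fin N))
    (τ : ℕ) (hτ : IsLeast {t : ℕ | ∀ x : Fin N, f^[t] x ∈ Function.periodicPts f} τ) :
    (∃ ρ : ℕ, 1 ≤ ρ ∧ ∀ x : Fin N, ∀ t ≥ ρ, f^[t] x ∈ Λ) ↔
    (∀ x : Fin N, f^[τ] x ∈ Λ) := by
  constructor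
  · rintro ⟨ρ, -, hρ⟩ x
    refine Function.mem_of_mem_periodicPts_of_iterate_mem (hτ.1 x) (ρ := ρ) fun t ht => ?_
    rw [← Function.iterate_add_apply]
    exact hρ x _ (le_add_right ht)
  · intro h
    exact ⟨τ + 1, Nat.le_add_left _ _, fun x t ht => Function.iterate_mem_of_le h (by omega) x⟩

/-- Theorem 1(2): the system is globally approximately synchronous iff
`f^[τ] x ∈ Λ` for every state `x`, where `τ` is the transient period. -/
theorem global_approx_sync_iff_tau (N : ℕ) (hN : 1 ≤ N) (f : Fin N → Fin N)
    (Λ : Set (Fin N))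
    (τ : ℕ) (hτ : IsLeast {t : ℕ | ∀ x : Fin N, f^[t] x ∈ Function.periodicPts f} τ) :
    (∃ ρ : ℕ, 1 ≤ ρ ∧ ∀ x : Fin N, ∀ t ≥ ρ, f^[t] x ∈ Λ) ↔
    (∀ x : Fin N, f^[τ] x ∈ Λ) :=
  global_approx_sync_iff_tau_general N f Λ τ hτ
end

section
/- Let N ≥ 1, f : Fin N → Fin N, Λ ⊆ Fin N and Φ ⊆ Fin N. Let L be the N×N real logic matrix whose i-th column is e_{f i}, let τ be the transient period of f and λ the least common multiple of the minimal periods of the periodic points of f. Define the index vectors Ξ₁ = Σ_{i∈Φ} e_i and Ξ₂ = Σ_{i∈Λ} e_i in ℝ^N. Then the system is approximately synchronous with respect to Φ if and only if sgn((Σ_{t=τ}^{τ+λ−1} L^t) · Ξ₁) ≤ Ξ₂, where sgn is applied entrywise and ≤ is the entrywise order on ℝ^N. -/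
/-!
From time `τ` on every orbit runs on a cycle whose length divides `λ`, so for `t ≥ τ` the
state `f^[t] x` depends only on `t mod λ`: an orbit eventually stays in `Λ` iff it lies in `Λ`
throughout the window `τ ≤ t < τ + λ`. On the matrix side `L^t e_j = e_{f^[t] j}`, so the
`i`-th entry of `(∑ L^t) Ξ₁` counts the pairs `(t, j)` of window times and initial states
in `Φ` with `f^[t] j = i`. Its sign is `1` exactly when `i` is visited during the window and
`0` otherwise, so the sign condition says that every state visited in the window lies in `Λ`.
-/

open scoped Classical

open Function Matrix Finset

namespace Function

variable {α : Type*} {f : α → α} {x : α} {τ n : ℕ}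

theorem IsPeriodicPt.iterate_add_mod_apply (h : IsPeriodicPt f n (f^[τ] x)) (s : ℕ) :
    f^[τ + s % n] x = f^[τ + s] x := by
  rw [add_comm, iterate_add_apply, h.iterate_mod_apply, ← iterate_add_apply, add_comm]

theorem exists_forall_iterate_mem_iff_forall_Icc {Φ Λ : Set α} (hn : 0 < n)
    (hper : ∀ x ∈ Φ, IsPeriodicPt f n (f^[τ] x)) :
    (∃ ρ : ℕ, 1 ≤ ρ ∧ ∀ x ∈ Φ, ∀ t ≥ ρ, f^[t] x ∈ Λ) ↔
      ∀ x ∈ Φ, ∀ t ∈ Icc τ (τ + n - 1), f^[t] x ∈ Λ := by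
  constructor
  · rintro ⟨ρ, -, hρ⟩ x hx t ht
    obtain ⟨s, hs, rfl⟩ : ∃ s < n, t = τ + s := ⟨t - τ, by grind⟩
    have hρn : ρ ≤ ρ * n := Nat.le_mul_of_pos_right ρ hn
    rw [← Nat.mod_eq_of_lt hs, ← Nat.add_mul_mod_self_right s ρ n,
      (hper x hx).iterate_add_mod_apply]
    exact hρ x hx _ (by omega)
  · intro h
    refine ⟨τ + 1, le_add_self, fun x hx t ht => ?_⟩
    obtain ⟨s, rfl⟩ := Nat.exists_eq_add_of_le (show τ ≤ t by omega)
    rw [← (hper x hx).iterate_add_mod_apply]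
    have hs := Nat.mod_lt s hn
    exact h x hx _ (mem_Icc.2 ⟨by omega, by omega⟩)

end Function

def logicMatrix {n : Type*} (R : Type*) [DecidableEq n] [Zero R] [One R] (f : n → n) :
    Matrix n n R :=
  Matrix.of fun i j => if i = f j then 1 else 0

section LogicMatrix

variable {n R : Type*} [Fintype n] [DecidableEq n] [Semiring R] (f : n → n)

theorem logicMatrix_mulVec_single (j : n) :
    logicMatrix R f *ᵥ Pi.single j 1 = Pi.single (f j) 1 := by
  ext i
  simp [logicMatrix, Pi.single_apply]

theorem logicMatrix_pow_mulVec_single (t : ℕ) (j : n) :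
    logicMatrix R f ^ t *ᵥ Pi.single j 1 = Pi.single (f^[t] j) 1 := by
  induction t generalizing j with
  | zero => rw [pow_zero, one_mulVec, iterate_zero_apply]
  | succ t ih => rw [pow_succ, ← mulVec_mulVec, logicMatrix_mulVec_single, ih, iterate_succ_apply]

theorem sum_logicMatrix_pow_mulVec_sum_single (T : Finset ℕ) (Φ : Finset n) :
    (∑ t ∈ T, logicMatrix R f ^ t) *ᵥ ∑ j ∈ Φ, Pi.single j 1 =
      ∑ p ∈ T ×ˢ Φ, Pi.single (f^[p.1] p.2) 1 := by
  rw [sum_product, sum_mulVec]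
  simp only [mulVec_sum, logicMatrix_pow_mulVec_single]

end LogicMatrix

theorem sum_single_one_apply_eq_card {ι α R : Type*} [DecidableEq α] [Semiring R]
    (s : Finset ι) (g : ι → α) (a : α) :
    ∑ k ∈ s, (Pi.single (g k) (1 : R) : α → R) a = (#{k ∈ s | a = g k} : R) := by
  simp [Pi.single_apply]

theorem Real.sign_natCast_le_one (m : ℕ) : Real.sign m ≤ 1 := by
  rcases Nat.eq_zero_or_pos m with rfl | hm
  · simp
  · rw [Real.sign_of_pos (by exact_mod_cast hm)]

theorem sign_sum_single_le_sum_single_iff {ι α : Type*} [DecidableEq α] (s : Finset ι)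
    (g : ι → α) (Λ : Finset α) :
    (fun a => Real.sign ((∑ k ∈ s, (Pi.single (g k) (1 : ℝ) : α → ℝ)) a)) ≤
        ∑ a ∈ Λ, Pi.single a 1 ↔
      ∀ k ∈ s, g k ∈ Λ := by
  simp only [Pi.le_def, Finset.sum_apply, sum_pi_single, sum_single_one_apply_eq_card]
  constructor
  · intro h k hk
    by_contra hkΛ
    have hpos : 0 < #{k' ∈ s | g k = g k'} := card_pos.2 ⟨k, mem_filter.2 ⟨hk, rfl⟩⟩
    have hsign := h (g k)
    rw [if_neg hkΛ, Real.sign_of_pos (by exact_mod_cast hpos)] at hsign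
    exact one_ne_zero (hsign.antisymm zero_le_one)
  · intro h a
    split_ifs with ha
    · exact Real.sign_natCast_le_one _
    · have hempty : #{k ∈ s | a = g k} = 0 :=
        card_filter_eq_zero_iff.2 fun k hk hak => ha (hak ▸ h k hk)
      rw [hempty, Nat.cast_zero, Real.sign_zero]

theorem approx_sync_iff_sign_condition_general (N : ℕ) (f : Fin N → Fin N)
    (Λ Φ : Finset (Fin N))
    (L : Matrix (Fin N) (Fin N) ℝ)
    (hL : L = Matrix.of fun i j => if i = f j then (1 : ℝ) else 0)
    (τ : ℕ) (hτ : IsLeast {t : ℕ | ∀ x : Fin N, f^[t] x ∈ Function.periodicPts f} τ)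
    (lam : ℕ)
    (hlam : lam = (Finset.univ.filter fun x : Fin N => x ∈ Function.periodicPts f).lcm
      (Function.minimalPeriod f)) :
    (∃ ρ : ℕ, 1 ≤ ρ ∧ ∀ x ∈ Φ, ∀ t ≥ ρ, f^[t] x ∈ Λ) ↔
    (fun i : Fin N =>
        Real.sign (((∑ t ∈ Finset.Icc τ (τ + lam - 1), L ^ t).mulVec
          (∑ i ∈ Φ, (Pi.single i (1 : ℝ) : Fin N → ℝ))) i)) ≤
      (∑ i ∈ Λ, (Pi.single i (1 : ℝ) : Fin N → ℝ)) := by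
  have hlam_pos : 0 < lam := by
    rw [hlam, Nat.pos_iff_ne_zero, Ne, Finset.lcm_eq_zero_iff]
    rintro ⟨x, hx, hx0⟩
    exact (minimalPeriod_pos_of_mem_periodicPts (mem_filter.1 hx).2).ne' hx0
  have hper (x : Fin N) : IsPeriodicPt f lam (f^[τ] x) :=
    (isPeriodicPt_minimalPeriod f _).trans_dvd
      (hlam ▸ dvd_lcm (mem_filter.2 ⟨mem_univ _, hτ.1 x⟩))
  have hL' : L = logicMatrix ℝ f := hL
  calc _ ↔ ∀ x ∈ Φ, ∀ t ∈ Icc τ (τ + lam - 1), f^[t] x ∈ Λ :=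
        exists_forall_iterate_mem_iff_forall_Icc hlam_pos fun x _ => hper x
    _ ↔ ∀ p ∈ Icc τ (τ + lam - 1) ×ˢ Φ, f^[p.1] p.2 ∈ Λ := by
        simp only [mem_product, Prod.forall]
        tauto
    _ ↔ _ := by
        rw [hL', sum_logicMatrix_pow_mulVec_sum_single, sign_sum_single_le_sum_single_iff]

/-- Corollary 2(1): approximate synchronization with respect to `Φ` holds
iff `sgn((∑_{t=τ}^{τ+λ−1} L^t) Ξ₁) ≤ Ξ₂` entrywise, where `Ξ₁, Ξ₂` are
the index vectors of `Φ` and `Λ`. -/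
theorem approx_sync_iff_sign_condition (N : ℕ) (hN : 1 ≤ N) (f : Fin N → Fin N)
    (Λ Φ : Finset (Fin N))
    (L : Matrix (Fin N) (Fin N) ℝ)
    (hL : L = Matrix.of fun i j => if i = f j then (1 : ℝ) else 0)
    (τ : ℕ) (hτ : IsLeast {t : ℕ | ∀ x : Fin N, f^[t] x ∈ Function.periodicPts f} τ)
    (lam : ℕ)
    (hlam : lam = (Finset.univ.filter fun x : Fin N => x ∈ Function.periodicPts f).lcm
      (Function.minimalPeriod f)) :
    (∃ ρ : ℕ, 1 ≤ ρ ∧ ∀ x ∈ Φ, ∀ t ≥ ρ, f^[t] x ∈ Λ) ↔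
    (fun i : Fin N =>
        Real.sign (((∑ t ∈ Finset.Icc τ (τ + lam - 1), L ^ t).mulVec
          (∑ i ∈ Φ, (Pi.single i (1 : ℝ) : Fin N → ℝ))) i)) ≤
      (∑ i ∈ Λ, (Pi.single i (1 : ℝ) : Fin N → ℝ)) :=
  approx_sync_iff_sign_condition_general N f Λ Φ L hL τ hτ lam hlam
end

section
/- Let N ≥ 1, f : Fin N → Fin N and Λ ⊆ Fin N. Let Φmax = {x : ∃ ρ ≥ 1, ∀ t ≥ ρ, f^[t] x ∈ Λ} be the maximum approximate synchronization basin, and let I be the maximum invariant subset of Λ, i.e., the union of all sets S ⊆ Λ with f(S) ⊆ S. Then Φmax = ∅ if and only if I = ∅. -/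
/-!
A point of an invariant subset of `Λ` stays in `Λ` for all times, so it lies in the basin.
Conversely, if the orbit of `x` lies in `Λ` from time `ρ` on, then the forward orbit of
`f^[ρ] x` is an invariant subset of `Λ`.
-/

open Set

namespace Function

variable {α : Type*} (f : α → α)

theorem mapsTo_range_iterate (y : α) :
    MapsTo f (range fun n => f^[n] y) (range fun n => f^[n] y) :=
  mapsTo_range_iff.2 fun n => ⟨n + 1, iterate_succ_apply' f n y⟩

variable {f} {Λ : Set α}

theorem iterate_mem_of_mapsTo {S : Set α} (hSΛ : S ⊆ Λ) (hS : MapsTo f S S) {x : α}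
    (hx : x ∈ S) (t : ℕ) : f^[t] x ∈ Λ :=
  hSΛ (hS.iterate t hx)

theorem exists_mapsTo_subset_of_iterate_mem {x : α} {ρ : ℕ} (h : ∀ t ≥ ρ, f^[t] x ∈ Λ) :
    ∃ S ⊆ Λ, MapsTo f S S ∧ f^[ρ] x ∈ S := by
  refine ⟨range fun n => f^[n] (f^[ρ] x), ?_, mapsTo_range_iterate f _, 0, rfl⟩
  rintro _ ⟨n, rfl⟩
  simpa only [iterate_add_apply] using h (n + ρ) (Nat.le_add_left ρ n)

end Function

open Function in
theorem basin_empty_iff_invariant_empty_general (N : ℕ) (f : Fin N → Fin N)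
    (Λ : Set (Fin N)) (Φmax I : Set (Fin N))
    (hΦmax : Φmax = {x : Fin N | ∃ ρ : ℕ, 1 ≤ ρ ∧ ∀ t ≥ ρ, f^[t] x ∈ Λ})
    (hI : I = ⋃₀ {S : Set (Fin N) | S ⊆ Λ ∧ f '' S ⊆ S}) :
    Φmax = ∅ ↔ I = ∅ := by
  subst hΦmax hI
  simp only [← not_nonempty_iff_eq_empty, not_iff_not]
  constructor
  · rintro ⟨x, ρ, -, hx⟩
    obtain ⟨S, hSΛ, hS, hxS⟩ := exists_mapsTo_subset_of_iterate_mem hx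
    exact ⟨f^[ρ] x, S, ⟨hSΛ, hS.image_subset⟩, hxS⟩
  · rintro ⟨x, S, ⟨hSΛ, hS⟩, hxS⟩
    exact ⟨x, 1, le_rfl, fun t _ =>
      iterate_mem_of_mapsTo hSΛ (mapsTo_iff_image_subset.2 hS) hxS t⟩

/-- Proposition 2(1): the maximum approximate synchronization basin is
empty iff the maximum invariant subset of `Λ` is empty. -/
theorem basin_empty_iff_invariant_empty (N : ℕ) (hN : 1 ≤ N) (f : Fin N → Fin N)
    (Λ : Set (Fin N)) (Φmax I : Set (Fin N))
    (hΦmax : Φmax = {x : Fin N | ∃ ρ : ℕ, 1 ≤ ρ ∧ ∀ t ≥ ρ, f^[t] x ∈ Λ})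
    (hI : I = ⋃₀ {S : Set (Fin N) | S ⊆ Λ ∧ f '' S ⊆ S}) :
    Φmax = ∅ ↔ I = ∅ :=
  basin_empty_iff_invariant_empty_general N f Λ Φmax I hΦmax hI
end

section
/- Let N ≥ 1, f : Fin N → Fin N and Λ ⊆ Fin N. Let Φmax = {x : ∃ ρ ≥ 1, ∀ t ≥ ρ, f^[t] x ∈ Λ} be the maximum approximate synchronization basin, let I be the maximum invariant subset of Λ (the union of all S ⊆ Λ with f(S) ⊆ S), let P(f) be the set of periodic points of f, and let Ω_{Φmax} = {y ∈ P(f) : ∃ x ∈ Φmax, ∃ t ≥ 0, f^[t] x = y} be the set of attractor states reachable from Φmax. Then Φmax ≠ ∅ if and only if I ≠ ∅ and Ω_{Φmax} ⊆ I. -/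
/-!
The tail `{f^[t] x | t ≥ ρ}` of an orbit that eventually stays in `Λ` is an invariant subset of
`Λ`, and a periodic point reached from `x` recurs in every such tail. Conversely, a point of an
invariant subset of `Λ` never leaves `Λ`.
-/

open Set

namespace Function

variable {α : Type*}

def maxInvariantSubset (f : α → α) (Λ : Set α) : Set α :=
  ⋃₀ {S | S ⊆ Λ ∧ f '' S ⊆ S}

variable {f : α → α} {Λ : Set α} {x : α}

theorem iterate_mem_of_mem_maxInvariantSubset (hx : x ∈ maxInvariantSubset f Λ) (t : ℕ) :
    f^[t] x ∈ Λ := by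
  obtain ⟨S, ⟨hSΛ, hSf⟩, hxS⟩ := hx
  exact hSΛ ((mapsTo_iff_image_subset.2 hSf).iterate t hxS)

theorem image_iterate_Ici_subset (x : α) (ρ : ℕ) :
    f '' ((f^[·] x) '' Ici ρ) ⊆ (f^[·] x) '' Ici ρ := by
  rintro _ ⟨_, ⟨t, ht, rfl⟩, rfl⟩
  exact ⟨t + 1, ht.trans (Nat.le_succ t), iterate_succ_apply' f t x⟩

theorem iterate_mem_maxInvariantSubset {ρ t : ℕ} (hΛ : ∀ s ≥ ρ, f^[s] x ∈ Λ) (ht : ρ ≤ t) :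
    f^[t] x ∈ maxInvariantSubset f Λ := by
  refine ⟨(f^[·] x) '' Ici ρ, ⟨?_, image_iterate_Ici_subset x ρ⟩, t, ht, rfl⟩
  rintro _ ⟨s, hs, rfl⟩
  exact hΛ s hs

theorem exists_iterate_eq_of_iterate_mem_periodicPts {t : ℕ} (h : f^[t] x ∈ periodicPts f)
    (ρ : ℕ) : ∃ s ≥ ρ, f^[s] x = f^[t] x := by
  obtain ⟨p, hp, hper⟩ := h
  refine ⟨ρ * p + t, le_add_right (Nat.le_mul_of_pos_right ρ hp), ?_⟩
  rw [iterate_add_apply]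
  exact (hper.const_mul ρ).eq

end Function

open Function

theorem basin_nonempty_iff_attractors_in_invariant_general (N : ℕ)
    (f : Fin N → Fin N) (Λ : Set (Fin N)) (Φmax I Ω : Set (Fin N))
    (hΦmax : Φmax = {x : Fin N | ∃ ρ : ℕ, 1 ≤ ρ ∧ ∀ t ≥ ρ, f^[t] x ∈ Λ})
    (hI : I = ⋃₀ {S : Set (Fin N) | S ⊆ Λ ∧ f '' S ⊆ S})
    (hΩ : Ω = {y : Fin N | y ∈ Function.periodicPts f ∧ ∃ x ∈ Φmax, ∃ t : ℕ, f^[t] x = y}) :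
    Φmax ≠ ∅ ↔ (I ≠ ∅ ∧ Ω ⊆ I) := by
  change I = maxInvariantSubset f Λ at hI
  subst hΦmax hI hΩ
  simp only [← nonempty_iff_ne_empty]
  constructor
  · rintro ⟨x, ρ, -, hx⟩
    refine ⟨⟨_, iterate_mem_maxInvariantSubset hx le_rfl⟩, ?_⟩
    rintro _ ⟨hper, x', ⟨ρ', -, hx'⟩, t, rfl⟩
    obtain ⟨s, hs, hst⟩ := exists_iterate_eq_of_iterate_mem_periodicPts hper ρ'
    exact hst ▸ iterate_mem_maxInvariantSubset hx' hs
  · rintro ⟨⟨x, hx⟩, -⟩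
    exact ⟨x, 1, le_rfl, fun t _ => iterate_mem_of_mem_maxInvariantSubset hx t⟩

/-- Proposition 2(2): the maximum approximate synchronization basin is
nonempty iff the maximum invariant subset `I` of `Λ` is nonempty and all
attractor states reachable from the basin lie in `I`. -/
theorem basin_nonempty_iff_attractors_in_invariant (N : ℕ) (hN : 1 ≤ N)
    (f : Fin N → Fin N) (Λ : Set (Fin N)) (Φmax I Ω : Set (Fin N))
    (hΦmax : Φmax = {x : Fin N | ∃ ρ : ℕ, 1 ≤ ρ ∧ ∀ t ≥ ρ, f^[t] x ∈ Λ})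
    (hI : I = ⋃₀ {S : Set (Fin N) | S ⊆ Λ ∧ f '' S ⊆ S})
    (hΩ : Ω = {y : Fin N | y ∈ Function.periodicPts f ∧ ∃ x ∈ Φmax, ∃ t : ℕ, f^[t] x = y}) :
    Φmax ≠ ∅ ↔ (I ≠ ∅ ∧ Ω ⊆ I) :=
  basin_nonempty_iff_attractors_in_invariant_general N f Λ Φmax I Ω hΦmax hI hΩ
end
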